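/- Let X have smooth density on R, η > 0, Y = X + ηU with U ~ N(0,1) independent of X, and ψ(y) = E[X | Y = y]. Then ψ'(y) = η²·J(y), where J(y) = ∫ p(x|y)·(∂/∂y log p(x|y))² dx ≥ 0 is the conditional Fisher information; in particular ψ is nondecreasing. -/

import Mathlib

open MeasureTheory

/-- One-dimensional Gaussian kernel with standard deviation `η`. -/
noncomputable def gauss1 (η v : ℝ) : ℝ :=
  (Real.sqrt (2 * Real.pi * η ^ 2))⁻¹ * Real.exp (-v ^ 2 / (2 * η ^ 2))

/-- Marginal density `p̃` of `Y = X + ηU` when `X` has density `p` and `U ~ N(0,1)`. -/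
noncomputable def ptil (p : ℝ → ℝ) (η y : ℝ) : ℝ :=
  ∫ x, p x * gauss1 η (y - x)

/-- Conditional density `p(x | y)` of `X` given `Y = y`. -/
noncomputable def condDens (p : ℝ → ℝ) (η x y : ℝ) : ℝ :=
  p x * gauss1 η (y - x) / ptil p η y

/-- Posterior mean `ψ(y) = E[X | Y = y]`. -/
noncomputable def postMean (p : ℝ → ℝ) (η y : ℝ) : ℝ :=
  (∫ x, x * (p x * gauss1 η (y - x))) / ptil p η y

/-- Conditional Fisher information `J(y) = ∫ p(x|y) (∂/∂y log p(x|y))² dx`. -/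
noncomputable def condFisher (p : ℝ → ℝ) (η y : ℝ) : ℝ :=
  ∫ x, condDens p η x y * (deriv (fun y' => Real.log (condDens p η x y')) y) ^ 2

lemma gauss1_pos {η : ℝ} (hη : 0 < η) (v : ℝ) : 0 < gauss1 η v := by
  unfold gauss1
  have : 0 < Real.sqrt (2 * Real.pi * η ^ 2) := by
    apply Real.sqrt_pos.2
    positivity
  positivity

lemma gauss1_le {η : ℝ} (hη : 0 < η) (v : ℝ) :
    gauss1 η v ≤ (Real.sqrt (2 * Real.pi * η ^ 2))⁻¹ := by
  unfold gauss1
  have h1 : Real.exp (-v ^ 2 / (2 * η ^ 2)) ≤ 1 := by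
    rw [Real.exp_le_one_iff]
    have : (0:ℝ) < 2 * η ^ 2 := by positivity
    apply div_nonpos_of_nonpos_of_nonneg <;> nlinarith [sq_nonneg v]
  have h2 : (0:ℝ) ≤ (Real.sqrt (2 * Real.pi * η ^ 2))⁻¹ := by positivity
  calc (Real.sqrt (2 * Real.pi * η ^ 2))⁻¹ * Real.exp (-v ^ 2 / (2 * η ^ 2))
      ≤ (Real.sqrt (2 * Real.pi * η ^ 2))⁻¹ * 1 := by
        exact mul_le_mul_of_nonneg_left h1 h2
    _ = _ := mul_one _

lemma abs_mul_exp_le {σ : ℝ} (hσ : 0 < σ) (v : ℝ) :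
    |v| * Real.exp (-v ^ 2 / (2 * σ ^ 2)) ≤ 2 * σ := by
  have hexp1 : Real.exp (-v ^ 2 / (2 * σ ^ 2)) ≤ 1 := by
    rw [Real.exp_le_one_iff]
    apply div_nonpos_of_nonpos_of_nonneg <;> nlinarith [sq_nonneg v]
  rcases le_or_gt |v| σ with h | h
  · calc |v| * Real.exp (-v ^ 2 / (2 * σ ^ 2)) ≤ σ * 1 :=
        mul_le_mul h hexp1 (Real.exp_nonneg _) hσ.le
      _ ≤ 2 * σ := by linarith
  · have hv : 0 < |v| := lt_trans hσ h
    have key : Real.exp (-v ^ 2 / (2 * σ ^ 2)) ≤ 2 * σ ^ 2 / v ^ 2 := by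
      have h1 : v ^ 2 / (2 * σ ^ 2) ≤ Real.exp (v ^ 2 / (2 * σ ^ 2)) := by
        have := Real.add_one_le_exp (v ^ 2 / (2 * σ ^ 2))
        linarith
      have hv2 : 0 < v ^ 2 := by rw [← sq_abs]; positivity
      have h2 : 0 < v ^ 2 / (2 * σ ^ 2) := div_pos hv2 (by positivity)
      rw [show -v ^ 2 / (2 * σ ^ 2) = -(v ^ 2 / (2 * σ ^ 2)) by ring, Real.exp_neg]
      have hv2 : 0 < v ^ 2 := by rw [← sq_abs]; positivity
      rw [inv_le_comm₀ (Real.exp_pos _) (div_pos (by positivity) hv2)]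
      calc (2 * σ ^ 2 / v ^ 2)⁻¹ = v ^ 2 / (2 * σ ^ 2) := by
            rw [inv_div]
        _ ≤ Real.exp (v ^ 2 / (2 * σ ^ 2)) := h1
    calc |v| * Real.exp (-v ^ 2 / (2 * σ ^ 2)) ≤ |v| * (2 * σ ^ 2 / v ^ 2) :=
        mul_le_mul_of_nonneg_left key hv.le
      _ = 2 * σ ^ 2 / |v| := by
          have hv2 : v ^ 2 ≠ 0 := by nlinarith [sq_abs v]
          field_simp
          rw [sq_abs, div_self hv2]
      _ ≤ 2 * σ ^ 2 / σ := by
          apply div_le_div_of_nonneg_left (by positivity) hσ h.le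
      _ = 2 * σ := by field_simp

lemma abs_mul_gauss1_le {η : ℝ} (hη : 0 < η) (v : ℝ) :
    |v| * gauss1 η v ≤ (Real.sqrt (2 * Real.pi * η ^ 2))⁻¹ * (2 * η) := by
  unfold gauss1
  have h := abs_mul_exp_le hη v
  have hA : (0:ℝ) ≤ (Real.sqrt (2 * Real.pi * η ^ 2))⁻¹ := by positivity
  calc |v| * ((Real.sqrt (2 * Real.pi * η ^ 2))⁻¹ * Real.exp (-v ^ 2 / (2 * η ^ 2)))
      = (Real.sqrt (2 * Real.pi * η ^ 2))⁻¹ * (|v| * Real.exp (-v ^ 2 / (2 * η ^ 2))) := by ring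
    _ ≤ (Real.sqrt (2 * Real.pi * η ^ 2))⁻¹ * (2 * η) := mul_le_mul_of_nonneg_left h hA

lemma sq_mul_gauss1_le {η : ℝ} (hη : 0 < η) (v : ℝ) :
    v ^ 2 * gauss1 η v ≤ (Real.sqrt (2 * Real.pi * η ^ 2))⁻¹ * (8 * η ^ 2) := by
  unfold gauss1
  have hs : (0:ℝ) < Real.sqrt 2 * η := by positivity
  have h := abs_mul_exp_le hs v
  have hexp : Real.exp (-v ^ 2 / (2 * η ^ 2)) = (Real.exp (-v ^ 2 / (2 * (Real.sqrt 2 * η) ^ 2))) ^ 2 := by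
    rw [← Real.exp_nat_mul]
    congr 1
    rw [mul_pow, Real.sq_sqrt (by norm_num : (0:ℝ) ≤ 2)]
    field_simp
    ring
  have hkey : v ^ 2 * Real.exp (-v ^ 2 / (2 * η ^ 2)) ≤ 8 * η ^ 2 := by
    rw [hexp]
    have h2 : (|v| * Real.exp (-v ^ 2 / (2 * (Real.sqrt 2 * η) ^ 2))) ^ 2
        = v ^ 2 * (Real.exp (-v ^ 2 / (2 * (Real.sqrt 2 * η) ^ 2))) ^ 2 := by
      rw [mul_pow, sq_abs]
    rw [← h2]
    calc (|v| * Real.exp (-v ^ 2 / (2 * (Real.sqrt 2 * η) ^ 2))) ^ 2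
        ≤ (2 * (Real.sqrt 2 * η)) ^ 2 := by
          apply pow_le_pow_left₀ (by positivity) h 2
      _ = 8 * η ^ 2 := by
          have h2 : (Real.sqrt 2) ^ 2 = 2 := Real.sq_sqrt (by norm_num)
          nlinarith
  have hA : (0:ℝ) ≤ (Real.sqrt (2 * Real.pi * η ^ 2))⁻¹ := by positivity
  calc v ^ 2 * ((Real.sqrt (2 * Real.pi * η ^ 2))⁻¹ * Real.exp (-v ^ 2 / (2 * η ^ 2)))
      = (Real.sqrt (2 * Real.pi * η ^ 2))⁻¹ * (v ^ 2 * Real.exp (-v ^ 2 / (2 * η ^ 2))) := by ring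
    _ ≤ _ := mul_le_mul_of_nonneg_left hkey hA

lemma hasDerivAt_gauss1 {η : ℝ} (hη : 0 < η) (x y : ℝ) :
    HasDerivAt (fun y' => gauss1 η (y' - x)) ((x - y) / η ^ 2 * gauss1 η (y - x)) y := by
  have h1 : HasDerivAt (fun y' : ℝ => y' - x) 1 y := (hasDerivAt_id y).sub_const x
  have h2 : HasDerivAt (fun y' : ℝ => -(y' - x) ^ 2 / (2 * η ^ 2))
      (-(2 * (y - x) ^ 1 * 1) / (2 * η ^ 2)) y := ((h1.pow 2).neg).div_const _
  have h3 := (h2.exp).const_mul (Real.sqrt (2 * Real.pi * η ^ 2))⁻¹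
  have heq : (x - y) / η ^ 2 * gauss1 η (y - x)
      = (Real.sqrt (2 * Real.pi * η ^ 2))⁻¹ *
        (Real.exp (-(y - x) ^ 2 / (2 * η ^ 2)) * (-(2 * (y - x) ^ 1 * 1) / (2 * η ^ 2))) := by
    unfold gauss1
    field_simp
    ring
  rw [heq]
  exact h3

lemma continuous_gauss1 {η : ℝ} : Continuous (gauss1 η) := by
  unfold gauss1; fun_prop

lemma p_integrable {p : ℝ → ℝ} (hp1 : ∫ x, p x = 1) : Integrable p := by
  by_contra h
  rw [integral_undef h] at hp1; norm_num at hp1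

/-- Integrability of `w · p · gauss` when `|w|·p` is integrable. -/
lemma int_weighted {p : ℝ → ℝ} {η : ℝ} (hη : 0 < η) (hc : Continuous p)
    {w : ℝ → ℝ} (hwc : Continuous w) (hint : Integrable (fun x => |w x| * p x))
    (hpos : ∀ x, 0 ≤ p x) (y : ℝ) :
    Integrable (fun x => w x * (p x * gauss1 η (y - x))) := by
  apply Integrable.mono (hint.const_mul (Real.sqrt (2 * Real.pi * η ^ 2))⁻¹)
  · exact (hwc.mul (hc.mul (continuous_gauss1.comp
      (continuous_const.sub continuous_id)))).aestronglyMeasurable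
  · filter_upwards with x
    have h1 := gauss1_le hη (y - x)
    have h2 := (gauss1_pos hη (y - x)).le
    have h3 := hpos x
    rw [Real.norm_eq_abs, Real.norm_eq_abs, abs_mul, abs_mul,
      abs_of_nonneg h3, abs_of_nonneg h2,
      abs_of_nonneg (by positivity : (0:ℝ) ≤ (Real.sqrt (2 * Real.pi * η ^ 2))⁻¹ * (|w x| * p x))]
    calc |w x| * (p x * gauss1 η (y - x))
        ≤ |w x| * (p x * (Real.sqrt (2 * Real.pi * η ^ 2))⁻¹) := by
          apply mul_le_mul_of_nonneg_left _ (abs_nonneg _)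
          exact mul_le_mul_of_nonneg_left h1 h3
      _ = (Real.sqrt (2 * Real.pi * η ^ 2))⁻¹ * (|w x| * p x) := by ring

/-- Differentiation under the integral sign for `y ↦ ∫ w x · p x · gauss η (y - x)`. -/
lemma hasDerivAt_weighted {p : ℝ → ℝ} {η : ℝ} (hη : 0 < η) (hc : Continuous p)
    {w : ℝ → ℝ} (hwc : Continuous w) (hint : Integrable (fun x => |w x| * p x))
    (hpos : ∀ x, 0 ≤ p x) (y : ℝ) :
    HasDerivAt (fun y' => ∫ x, w x * (p x * gauss1 η (y' - x)))
      (∫ x, w x * (p x * ((x - y) / η ^ 2 * gauss1 η (y - x)))) y := by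
  have key := hasDerivAt_integral_of_dominated_loc_of_deriv_le (μ := volume)
    (F := fun y' x => w x * (p x * gauss1 η (y' - x)))
    (F' := fun y' x => w x * (p x * ((x - y') / η ^ 2 * gauss1 η (y' - x))))
    (x₀ := y) (s := Metric.ball y 1)
    (bound := fun x => |w x| * p x * ((Real.sqrt (2 * Real.pi * η ^ 2))⁻¹ * (2 * η) / η ^ 2))
    (Metric.ball_mem_nhds y one_pos) ?meas ?int ?meas' ?bnd ?bint ?diff
  · exact key.2
  case meas =>
    filter_upwards with y'
    exact (hwc.mul (hc.mul (continuous_gauss1.comp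
      (continuous_const.sub continuous_id)))).aestronglyMeasurable
  case int => exact int_weighted hη hc hwc hint hpos y
  case meas' =>
    apply Continuous.aestronglyMeasurable
    exact hwc.mul (hc.mul (((continuous_id.sub continuous_const).div_const _).mul
      (continuous_gauss1.comp (continuous_const.sub continuous_id))))
  case bnd =>
    filter_upwards with x y' _
    rw [Real.norm_eq_abs, abs_mul, abs_mul, abs_mul, abs_of_nonneg (hpos x),
      abs_of_nonneg (gauss1_pos hη (y' - x)).le]
    have h1 : |(x - y') / η ^ 2| * gauss1 η (y' - x)
        ≤ (Real.sqrt (2 * Real.pi * η ^ 2))⁻¹ * (2 * η) / η ^ 2 := by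
      rw [abs_div, abs_of_nonneg (by positivity : (0:ℝ) ≤ η ^ 2)]
      rw [div_mul_eq_mul_div, div_le_div_iff_of_pos_right (by positivity)]
      have : |x - y'| = |y' - x| := abs_sub_comm x y'
      rw [this]
      exact abs_mul_gauss1_le hη (y' - x)
    calc |w x| * (p x * (|(x - y') / η ^ 2| * gauss1 η (y' - x)))
        ≤ |w x| * (p x * ((Real.sqrt (2 * Real.pi * η ^ 2))⁻¹ * (2 * η) / η ^ 2)) := by
          apply mul_le_mul_of_nonneg_left _ (abs_nonneg _)
          exact mul_le_mul_of_nonneg_left h1 (hpos x)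
      _ = |w x| * p x * ((Real.sqrt (2 * Real.pi * η ^ 2))⁻¹ * (2 * η) / η ^ 2) := by ring
  case bint => exact hint.mul_const _
  case diff =>
    filter_upwards with x y' _
    exact ((hasDerivAt_gauss1 hη x y').const_mul (p x)).const_mul (w x)

lemma ptil_pos {p : ℝ → ℝ} {η : ℝ} (hη : 0 < η) (hc : Continuous p)
    (hpos : ∀ x, 0 < p x) (hp1 : ∫ x, p x = 1) (y : ℝ) : 0 < ptil p η y := by
  have hint : Integrable (fun x => p x * gauss1 η (y - x)) := by
    have := int_weighted hη hc (continuous_const (y := (1:ℝ))) ?_ (fun x => (hpos x).le) y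
    · simpa using this
    · simpa using p_integrable hp1
  rw [ptil, integral_pos_iff_support_of_nonneg
    (fun x => le_of_lt (mul_pos (hpos x) (gauss1_pos hη _))) hint]
  have : Function.support (fun x => p x * gauss1 η (y - x)) = Set.univ := by
    ext x
    simp only [Function.support, Set.mem_setOf_eq, Set.mem_univ, iff_true]
    exact (mul_pos (hpos x) (gauss1_pos hη (y - x))).ne'
  rw [this]
  simp

noncomputable def Mom1 (p : ℝ → ℝ) (η y : ℝ) : ℝ := ∫ x, x * (p x * gauss1 η (y - x))
noncomputable def Mom2 (p : ℝ → ℝ) (η y : ℝ) : ℝ := ∫ x, x ^ 2 * (p x * gauss1 η (y - x))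

section main
variable {p : ℝ → ℝ} {η : ℝ} (hη : 0 < η) (hc : Continuous p) (hpos : ∀ x, 0 < p x)
  (hp1 : ∫ x, p x = 1) (hmean : Integrable fun x => |x| * p x)

include hη hc hpos hp1 in
lemma int_q0 (y : ℝ) : Integrable (fun x => p x * gauss1 η (y - x)) := by
  have := int_weighted hη hc (continuous_const (y := (1:ℝ)))
    (by simpa using p_integrable hp1) (fun x => (hpos x).le) y
  simpa using this

include hη hc hpos hmean in
lemma int_q1 (y : ℝ) : Integrable (fun x => x * (p x * gauss1 η (y - x))) :=
  int_weighted hη hc continuous_id (by simpa using hmean) (fun x => (hpos x).le) y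

include hη hc hpos hp1 in
lemma int_q2 (y : ℝ) : Integrable (fun x => x ^ 2 * (p x * gauss1 η (y - x))) := by
  set A := (Real.sqrt (2 * Real.pi * η ^ 2))⁻¹ with hA
  apply Integrable.mono ((p_integrable hp1).const_mul (2 * (A * (8 * η ^ 2)) + 2 * y ^ 2 * A))
  · exact ((continuous_pow 2).mul (hc.mul (continuous_gauss1.comp
      (continuous_const.sub continuous_id)))).aestronglyMeasurable
  · filter_upwards with x
    have hg := (gauss1_pos hη (y - x)).le
    have hx2 : x ^ 2 ≤ 2 * (x - y) ^ 2 + 2 * y ^ 2 := by nlinarith [sq_nonneg (x - 2 * y)]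
    have h1 : x ^ 2 * gauss1 η (y - x) ≤ 2 * (A * (8 * η ^ 2)) + 2 * y ^ 2 * A := by
      calc x ^ 2 * gauss1 η (y - x)
          ≤ (2 * (x - y) ^ 2 + 2 * y ^ 2) * gauss1 η (y - x) :=
            mul_le_mul_of_nonneg_right hx2 hg
        _ = 2 * ((y - x) ^ 2 * gauss1 η (y - x)) + 2 * y ^ 2 * gauss1 η (y - x) := by ring
        _ ≤ 2 * (A * (8 * η ^ 2)) + 2 * y ^ 2 * A := by
            have := sq_mul_gauss1_le hη (y - x)
            have := gauss1_le hη (y - x)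
            have hy2 : (0:ℝ) ≤ 2 * y ^ 2 := by positivity
            rw [← hA] at *
            nlinarith
    have hA0 : (0:ℝ) ≤ A := by rw [hA]; positivity
    rw [Real.norm_eq_abs, Real.norm_eq_abs,
      abs_of_nonneg (mul_nonneg (sq_nonneg x) (mul_nonneg (hpos x).le hg)),
      abs_of_nonneg (mul_nonneg (by positivity) (hpos x).le)]
    calc x ^ 2 * (p x * gauss1 η (y - x)) = (x ^ 2 * gauss1 η (y - x)) * p x := by ring
      _ ≤ (2 * (A * (8 * η ^ 2)) + 2 * y ^ 2 * A) * p x :=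
          mul_le_mul_of_nonneg_right h1 (hpos x).le

include hη hc hpos hp1 hmean in
lemma hasDerivAt_ptil (y : ℝ) :
    HasDerivAt (ptil p η) ((Mom1 p η y - y * ptil p η y) / η ^ 2) y := by
  have h := hasDerivAt_weighted hη hc (w := fun _ => (1:ℝ)) continuous_const
    (by simpa using p_integrable hp1) (fun x => (hpos x).le) y
  simp only [one_mul] at h
  have heq : (∫ x, p x * ((x - y) / η ^ 2 * gauss1 η (y - x)))
      = (Mom1 p η y - y * ptil p η y) / η ^ 2 := by
    have hpt : ∀ x : ℝ, p x * ((x - y) / η ^ 2 * gauss1 η (y - x))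
        = (1 / η ^ 2) * (x * (p x * gauss1 η (y - x)))
          - (y / η ^ 2) * (p x * gauss1 η (y - x)) := by
      intro x; field_simp
    simp only [hpt]
    rw [integral_sub ((int_q1 hη hc hpos hmean y).const_mul _)
      ((int_q0 hη hc hpos hp1 y).const_mul _), integral_const_mul, integral_const_mul]
    unfold Mom1 ptil
    field_simp
  rw [heq] at h
  exact h

include hη hc hpos hp1 hmean in
lemma hasDerivAt_Mom1 (y : ℝ) :
    HasDerivAt (Mom1 p η) ((Mom2 p η y - y * Mom1 p η y) / η ^ 2) y := by
  have h := hasDerivAt_weighted hη hc (w := fun x => x) continuous_id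
    (by simpa using hmean) (fun x => (hpos x).le) y
  have heq : (∫ x, x * (p x * ((x - y) / η ^ 2 * gauss1 η (y - x))))
      = (Mom2 p η y - y * Mom1 p η y) / η ^ 2 := by
    have hpt : ∀ x : ℝ, x * (p x * ((x - y) / η ^ 2 * gauss1 η (y - x)))
        = (1 / η ^ 2) * (x ^ 2 * (p x * gauss1 η (y - x)))
          - (y / η ^ 2) * (x * (p x * gauss1 η (y - x))) := by
      intro x; field_simp
    simp only [hpt]
    rw [integral_sub ((int_q2 hη hc hpos hp1 y).const_mul _)
      ((int_q1 hη hc hpos hmean y).const_mul _), integral_const_mul, integral_const_mul]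
    unfold Mom2 Mom1
    field_simp
  rw [heq] at h
  exact h

include hη hc hpos hp1 hmean in
lemma deriv_log_cond (x y : ℝ) :
    deriv (fun y' => Real.log (condDens p η x y')) y
      = (x - y) / η ^ 2 - ((Mom1 p η y - y * ptil p η y) / η ^ 2) / ptil p η y := by
  have hden := hasDerivAt_ptil hη hc hpos hp1 hmean y
  have hnum : HasDerivAt (fun y' => p x * gauss1 η (y' - x))
      (p x * ((x - y) / η ^ 2 * gauss1 η (y - x))) y :=
    (hasDerivAt_gauss1 hη x y).const_mul (p x)
  have hpt := ptil_pos hη hc hpos hp1 y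
  have hcond : HasDerivAt (fun y' => condDens p η x y')
      ((p x * ((x - y) / η ^ 2 * gauss1 η (y - x)) * ptil p η y
        - p x * gauss1 η (y - x) * ((Mom1 p η y - y * ptil p η y) / η ^ 2)) / ptil p η y ^ 2)
      y := by
    unfold condDens
    exact hnum.div hden hpt.ne'
  have hcpos : 0 < condDens p η x y := by
    unfold condDens
    exact div_pos (mul_pos (hpos x) (gauss1_pos hη _)) hpt
  rw [(hcond.log hcpos.ne').deriv]
  unfold condDens
  have h1 : p x ≠ 0 := (hpos x).ne'
  have h2 : gauss1 η (y - x) ≠ 0 := (gauss1_pos hη _).ne'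
  have h3 : ptil p η y ≠ 0 := hpt.ne'
  have h4 : η ≠ 0 := hη.ne'
  field_simp
end main

section main2
variable {p : ℝ → ℝ} {η : ℝ} (hη : 0 < η) (hc : Continuous p) (hpos : ∀ x, 0 < p x)
  (hp1 : ∫ x, p x = 1) (hmean : Integrable fun x => |x| * p x)

include hη hc hpos hp1 hmean in
lemma condFisher_eq (y : ℝ) :
    condFisher p η y
      = (ptil p η y * Mom2 p η y - (Mom1 p η y) ^ 2) / (η ^ 4 * (ptil p η y) ^ 2) := by
  have hpt : 0 < ptil p η y := ptil_pos hη hc hpos hp1 y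
  have h4 : η ≠ 0 := hη.ne'
  have h1 : condFisher p η y = ∫ x, (p x * gauss1 η (y - x) / ptil p η y) *
      ((x - y) / η ^ 2 - ((Mom1 p η y - y * ptil p η y) / η ^ 2) / ptil p η y) ^ 2 := by
    unfold condFisher
    congr 1; funext x
    rw [deriv_log_cond hη hc hpos hp1 hmean x y]
    rfl
  have hexp : ∀ x : ℝ, (p x * gauss1 η (y - x) / ptil p η y) *
      ((x - y) / η ^ 2 - ((Mom1 p η y - y * ptil p η y) / η ^ 2) / ptil p η y) ^ 2
      = (1 / (η ^ 4 * ptil p η y)) * (x ^ 2 * (p x * gauss1 η (y - x)))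
        + (-(2 * (y / η ^ 4 + (((Mom1 p η y - y * ptil p η y) / η ^ 2) / ptil p η y) / η ^ 2))
            / ptil p η y) * (x * (p x * gauss1 η (y - x)))
        + (((y / η ^ 2 + ((Mom1 p η y - y * ptil p η y) / η ^ 2) / ptil p η y) ^ 2)
            / ptil p η y) * (p x * gauss1 η (y - x)) := by
    intro x
    field_simp
    ring
  rw [h1]
  simp only [hexp]
  have iA : Integrable (fun x : ℝ => (1 / (η ^ 4 * ptil p η y)) * (x ^ 2 * (p x * gauss1 η (y - x)))) :=
    (int_q2 hη hc hpos hp1 y).const_mul _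
  have iB : Integrable (fun x : ℝ =>
      (-(2 * (y / η ^ 4 + (((Mom1 p η y - y * ptil p η y) / η ^ 2) / ptil p η y) / η ^ 2))
        / ptil p η y) * (x * (p x * gauss1 η (y - x)))) :=
    (int_q1 hη hc hpos hmean y).const_mul _
  have iC : Integrable (fun x : ℝ =>
      (((y / η ^ 2 + ((Mom1 p η y - y * ptil p η y) / η ^ 2) / ptil p η y) ^ 2)
        / ptil p η y) * (p x * gauss1 η (y - x))) :=
    (int_q0 hη hc hpos hp1 y).const_mul _
  have iAB : Integrable (fun x : ℝ =>
      (1 / (η ^ 4 * ptil p η y)) * (x ^ 2 * (p x * gauss1 η (y - x)))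
      + (-(2 * (y / η ^ 4 + (((Mom1 p η y - y * ptil p η y) / η ^ 2) / ptil p η y) / η ^ 2))
        / ptil p η y) * (x * (p x * gauss1 η (y - x)))) := iA.add iB
  rw [integral_add iAB iC, integral_add iA iB,
    integral_const_mul, integral_const_mul, integral_const_mul]
  have e2 : (∫ x, x ^ 2 * (p x * gauss1 η (y - x))) = Mom2 p η y := rfl
  have e1 : (∫ x, x * (p x * gauss1 η (y - x))) = Mom1 p η y := rfl
  have e0 : (∫ x, p x * gauss1 η (y - x)) = ptil p η y := rfl
  rw [e2, e1, e0]
  field_simp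
  ring

include hη hc hpos hp1 hmean in
lemma key_hasDerivAt (y : ℝ) :
    HasDerivAt (postMean p η) (η ^ 2 * condFisher p η y) y := by
  have h0 := hasDerivAt_ptil hη hc hpos hp1 hmean y
  have h1 := hasDerivAt_Mom1 hη hc hpos hp1 hmean y
  have hpt : 0 < ptil p η y := ptil_pos hη hc hpos hp1 y
  have hψ := h1.div h0 hpt.ne'
  have hfun : postMean p η = fun y' => Mom1 p η y' / ptil p η y' := rfl
  rw [hfun]
  refine hψ.congr_deriv ?_
  rw [condFisher_eq hη hc hpos hp1 hmean y]
  have h4 : η ≠ 0 := hη.ne'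
  field_simp
  ring
end main2

/-- Let `X` have smooth positive density `p` with finite mean, `η > 0`, `Y = X + ηU` with
`U ~ N(0,1)` independent of `X`, and `ψ(y) = E[X | Y = y]`.  Then `ψ'(y) = η²·J(y)` where
`J(y) ≥ 0` is the conditional Fisher information; in particular `ψ` is nondecreasing. -/
theorem posterior_mean_deriv_eq_condFisher (p : ℝ → ℝ) (η : ℝ) (hη : 0 < η)
    (hsm : ContDiff ℝ (⊤ : ℕ∞) p) (hpos : ∀ x, 0 < p x) (hp1 : ∫ x, p x = 1)
    (hmean : Integrable fun x => |x| * p x)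
    (hJ_int : ∀ y, Integrable fun x =>
      condDens p η x y * (deriv (fun y' => Real.log (condDens p η x y')) y) ^ 2) :
    (∀ y, 0 ≤ condFisher p η y) ∧
      (∀ y, deriv (postMean p η) y = η ^ 2 * condFisher p η y) ∧
      Monotone (postMean p η) := by
  have hc : Continuous p := hsm.continuous
  have hJnn : ∀ y, 0 ≤ condFisher p η y := by
    intro y
    apply integral_nonneg
    intro x
    apply mul_nonneg _ (sq_nonneg _)
    unfold condDens
    have := ptil_pos hη hc hpos hp1 y
    have := (hpos x).le
    have := (gauss1_pos hη (y - x)).le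
    positivity
  refine ⟨hJnn, fun y => (key_hasDerivAt hη hc hpos hp1 hmean y).deriv, ?_⟩
  apply monotone_of_deriv_nonneg
  · exact fun y => (key_hasDerivAt hη hc hpos hp1 hmean y).differentiableAt
  · intro y
    rw [(key_hasDerivAt hη hc hpos hp1 hmean y).deriv]
    have := hJnn y
    positivity
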